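/- Let G = (V, E) be a finite graph and let G_STAB be the graph whose vertices are the stable sets of G, two distinct stable sets s, t being adjacent if and only if the induced subgraph G[s △ t] is connected (this is the graph of the stable set polytope STAB(G) by Chvátal's characterization). Then the edge expansion of G_STAB is at least 1: for every nonempty family X of stable sets of G with |X| at most half the total number of stable sets, the number of edges of G_STAB with exactly one endpoint in X is at least |X|. -/

import Mathlib

/-- A stable (independent) set of a graph: a set of vertices no two of which are
adjacent. -/
def IsStableSet {V : Type*} (G : SimpleGraph V) (s : Set V) : Prop :=
  ∀ v ∈ s, ∀ w ∈ s, ¬ G.Adj v w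

/-- The graph of the stable set polytope `STAB(G)` (by Chvátal's characterization):
vertices are the stable sets of `G`, two distinct stable sets being adjacent iff the
induced subgraph on their symmetric difference is connected. -/
def stableSetGraph {V : Type*} (G : SimpleGraph V) :
    SimpleGraph {s : Set V // IsStableSet G s} where
  Adj s t := s ≠ t ∧ (G.induce (symmDiff s.1 t.1)).Connected
  symm := by
    constructor
    intro s t h
    exact ⟨h.1.symm, symmDiff_comm s.1 t.1 ▸ h.2⟩
  loopless := by
    constructor
    intro s h
    exact h.1 rfl

/-- The set of edges of `G` with exactly one endpoint in `X`. -/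
def edgeBoundary {V : Type*} (G : SimpleGraph V) (X : Set V) : Set (Sym2 V) :=
  {e | e ∈ G.edgeSet ∧ ∃ v w, e = s(v, w) ∧ v ∈ X ∧ w ∉ X}

/-!
Canonical paths. For stable sets `s`, `t`, no edge of `G` joins two components of
`G[s ∆ t]`, so flipping these components one at a time, in an order that depends only on
`s ∆ t`, gives a path `s = u₀, …, uₙ = t` in `G_STAB` through stable sets. A pair `(s, t)`
separated by `X` has a step `uᵢuᵢ₊₁` crossing the cut; encode the pair by that edge together
with the stable set `wᵢ` reached by the reverse path from `t` after `i` steps. Since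
`uᵢ ∆ wᵢ = s ∆ t`, the step `i` is the label of the component `uᵢ ∆ uᵢ₊₁` and
`s = uᵢ ∆ (components of label < i)`, the encoding is injective. Hence
`2 |X| |Xᶜ| ≤ |δ(X)| N` for `N` stable sets in total, and `|Xᶜ| ≥ N / 2` gives `|δ(X)| ≥ |X|`.
-/

open scoped symmDiff

section CutCounting

variable {α : Type*}

def Set.cutPairs (X : Set α) : Set (α × α) := X ×ˢ Xᶜ ∪ Xᶜ ×ˢ X

theorem Set.mem_cutPairs {X : Set α} {p : α × α} : p ∈ X.cutPairs ↔ (p.1 ∈ X ↔ p.2 ∉ X) := by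
  simp only [Set.cutPairs, Set.mem_union, Set.mem_prod, Set.mem_compl_iff]
  tauto

theorem Set.ncard_cutPairs [Finite α] (X : Set α) :
    X.cutPairs.ncard = 2 * (X.ncard * Xᶜ.ncard) := by
  rw [Set.cutPairs, Set.ncard_union_eq (Set.disjoint_prod.2 (Or.inl disjoint_compl_right)),
    Set.ncard_prod, Set.ncard_prod]
  ring

theorem Set.ncard_le_of_injOn_cutPairs {β : Type*} [Finite α] [Finite β] {X : Set α}
    {B : Set β} (Φ : α × α → β × α) (hmaps : MapsTo Φ X.cutPairs (B ×ˢ univ))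
    (hinj : InjOn Φ X.cutPairs) (hX : 2 * X.ncard ≤ Nat.card α) : X.ncard ≤ B.ncard := by
  have hle := Set.ncard_le_ncard_of_injOn Φ hmaps hinj (Set.toFinite _)
  rw [Set.ncard_cutPairs, Set.ncard_prod, Set.ncard_univ] at hle
  have hsum := Set.ncard_add_ncard_compl X
  nlinarith

theorem exists_mem_iff_notMem_succ {X : Set α} (f : ℕ → α) {n : ℕ}
    (h : f 0 ∈ X ↔ f n ∉ X) : ∃ i, (f i ∈ X ↔ f (i + 1) ∉ X) := by
  induction n with
  | zero => exact absurd h (by tauto)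
  | succ n ih =>
    by_cases hn : f 0 ∈ X ↔ f n ∉ X
    · exact ih hn
    · exact ⟨n, by tauto⟩

theorem mem_edgeBoundary_of_adj {H : SimpleGraph α} {X : Set α} {a b : α} (h : H.Adj a b)
    (hab : a ∈ X ↔ b ∉ X) : s(a, b) ∈ edgeBoundary H X := by
  refine ⟨h, ?_⟩
  by_cases ha : a ∈ X
  · exact ⟨a, b, rfl, ha, hab.1 ha⟩
  · exact ⟨b, a, Sym2.eq_swap, by tauto, ha⟩

end CutCounting

section StableSets

variable {V : Type*}

theorem IsStableSet.symmDiff_of_adj_mem {G : SimpleGraph V} {s t F : Set V}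
    (hs : IsStableSet G s) (ht : IsStableSet G t) (hF : F ⊆ s ∆ t)
    (hclosed : ∀ x ∈ F, ∀ y ∈ s ∆ t, G.Adj x y → y ∈ F) : IsStableSet G (s ∆ F) := by
  have cross : ∀ a ∈ s ∆ F, ∀ b ∈ s ∆ F, a ∈ F → b ∉ F → ¬ G.Adj a b := by
    intro a ha b hb haF hbF hab
    have hat : a ∈ t := by have := hF haF; simp only [Set.mem_symmDiff] at ha this; tauto
    have hbs : b ∈ s := by simp only [Set.mem_symmDiff] at hb; tauto
    by_cases hbD : b ∈ s ∆ t
    · exact hbF (hclosed a haF b hbD hab)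
    · exact ht a hat b (by simp only [Set.mem_symmDiff] at hbD; tauto) hab
  intro a ha b hb hab
  by_cases haF : a ∈ F <;> by_cases hbF : b ∈ F
  · have := hF haF; have := hF hbF
    simp only [Set.mem_symmDiff] at *
    exact ht a (by tauto) b (by tauto) hab
  · exact cross a ha b hb haF hbF hab
  · exact cross b hb a ha hbF haF hab.symm
  · simp only [Set.mem_symmDiff] at ha hb
    exact hs a (by tauto) b (by tauto) hab

namespace SimpleGraph

variable (G : SimpleGraph V) [Finite V]

/-- An arbitrary numbering of the components of `G[D]`, read off the spanning subgraph of `G`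
with the edges inside `D` (in which vertices outside `D` are isolated and get junk labels). -/
noncomputable def componentLabel (D : Set V) (x : V) : ℕ :=
  Finite.equivFin _ (((⊤ : G.Subgraph).induce D).spanningCoe.connectedComponentMk x)

def componentsBelow (D : Set V) (i : ℕ) : Set V := {x | x ∈ D ∧ G.componentLabel D x < i}

def componentAt (D : Set V) (i : ℕ) : Set V := {x | x ∈ D ∧ G.componentLabel D x = i}

variable {G}

theorem componentLabel_eq_of_adj {D : Set V} {x y : V} (hx : x ∈ D) (hy : y ∈ D)
    (h : G.Adj x y) : G.componentLabel D x = G.componentLabel D y := by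
  rw [componentLabel, componentLabel,
    ConnectedComponent.connectedComponentMk_eq_of_adj (show _ ∧ _ ∧ _ from ⟨hx, hy, h⟩)]

theorem setOf_componentLabel_eq {D : Set V} {x : V} (hx : x ∈ D) :
    {y | y ∈ D ∧ G.componentLabel D y = G.componentLabel D x} =
      (((⊤ : G.Subgraph).induce D).spanningCoe.connectedComponentMk x).supp := by
  ext y
  simp only [Set.mem_ofPred_eq, ConnectedComponent.mem_supp_iff, componentLabel,
    Fin.val_inj, (Finite.equivFin _).apply_eq_iff_eq]
  refine ⟨And.right, fun h => ⟨?_, h⟩⟩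
  obtain ⟨p⟩ := ConnectedComponent.exact h.symm
  clear h
  induction p with
  | nil => exact hx
  | cons hadj _ ih => exact ih hadj.2.1

theorem connected_induce_componentAt {D : Set V} {i : ℕ} (h : (G.componentAt D i).Nonempty) :
    (G.induce (G.componentAt D i)).Connected := by
  obtain ⟨x, hxD, rfl⟩ := h
  rw [componentAt, setOf_componentLabel_eq hxD]
  refine (ConnectedComponent.connected_toSimpleGraph _).mono fun _ _ h => ?_
  exact h.2.2

theorem componentsBelow_zero (D : Set V) : G.componentsBelow D 0 = ∅ := by
  simp [componentsBelow]

theorem exists_componentsBelow_eq (D : Set V) : ∃ n, G.componentsBelow D n = D :=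
  ⟨_, Set.sep_eq_self_iff_mem_true.2 fun _ _ => Fin.is_lt _⟩

theorem componentsBelow_symmDiff_succ (D : Set V) (i : ℕ) :
    G.componentsBelow D i ∆ G.componentsBelow D (i + 1) = G.componentAt D i := by
  ext x
  simp only [Set.mem_symmDiff, componentsBelow, componentAt, Set.mem_ofPred_eq]
  by_cases hx : x ∈ D
  · simp only [hx, true_and]
    omega
  · simp [hx]

end SimpleGraph

open SimpleGraph

theorem IsStableSet.symmDiff_componentsBelow {G : SimpleGraph V} [Finite V] {s t : Set V}
    (hs : IsStableSet G s) (ht : IsStableSet G t) (i : ℕ) :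
    IsStableSet G (s ∆ G.componentsBelow (s ∆ t) i) :=
  hs.symmDiff_of_adj_mem ht (fun _ hx => hx.1) fun _ hx _ hy hxy =>
    ⟨hy, G.componentLabel_eq_of_adj hx.1 hy hxy ▸ hx.2⟩

abbrev StableSet (G : SimpleGraph V) := {s : Set V // IsStableSet G s}

variable {G : SimpleGraph V} [Finite V]

noncomputable def canonicalPath (s t : StableSet G) (i : ℕ) : StableSet G :=
  ⟨s.1 ∆ G.componentsBelow (s.1 ∆ t.1) i, s.2.symmDiff_componentsBelow t.2 i⟩

theorem canonicalPath_val (s t : StableSet G) (i : ℕ) :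
    (canonicalPath s t i).1 = s.1 ∆ G.componentsBelow (s.1 ∆ t.1) i :=
  rfl

theorem canonicalPath_zero (s t : StableSet G) : canonicalPath s t 0 = s :=
  Subtype.ext <| by simp [canonicalPath_val, componentsBelow_zero]

theorem exists_canonicalPath_eq (s t : StableSet G) : ∃ n, canonicalPath s t n = t := by
  obtain ⟨n, hn⟩ := exists_componentsBelow_eq (G := G) (s.1 ∆ t.1)
  exact ⟨n, Subtype.ext <| by simp [canonicalPath_val, hn]⟩

theorem canonicalPath_symmDiff_succ (s t : StableSet G) (i : ℕ) :
    (canonicalPath s t i).1 ∆ (canonicalPath s t (i + 1)).1 = G.componentAt (s.1 ∆ t.1) i := by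
  rw [canonicalPath_val, canonicalPath_val, symmDiff_symmDiff_symmDiff_comm, symmDiff_self,
    bot_symmDiff, componentsBelow_symmDiff_succ]

theorem canonicalPath_symmDiff_canonicalPath_swap (s t : StableSet G) (i : ℕ) :
    (canonicalPath s t i).1 ∆ (canonicalPath t s i).1 = s.1 ∆ t.1 := by
  rw [canonicalPath_val, canonicalPath_val, symmDiff_comm t.1 s.1,
    symmDiff_symmDiff_symmDiff_comm, symmDiff_self, symmDiff_bot]

theorem canonicalPath_symmDiff_componentsBelow (s t : StableSet G) (i : ℕ) :
    (canonicalPath s t i).1 ∆ G.componentsBelow (s.1 ∆ t.1) i = s.1 :=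
  symmDiff_symmDiff_cancel_right _ _

theorem nonempty_componentAt_of_canonicalPath_ne {s t : StableSet G} {i : ℕ}
    (h : canonicalPath s t i ≠ canonicalPath s t (i + 1)) :
    (G.componentAt (s.1 ∆ t.1) i).Nonempty := by
  rw [← canonicalPath_symmDiff_succ, Set.nonempty_iff_ne_empty]
  exact fun h' => h (Subtype.ext (symmDiff_eq_bot.1 h'))

theorem stableSetGraph_adj_canonicalPath_succ {s t : StableSet G} {i : ℕ}
    (h : canonicalPath s t i ≠ canonicalPath s t (i + 1)) :
    (stableSetGraph G).Adj (canonicalPath s t i) (canonicalPath s t (i + 1)) :=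
  ⟨h, canonicalPath_symmDiff_succ s t i ▸
    connected_induce_componentAt (nonempty_componentAt_of_canonicalPath_ne h)⟩

theorem eq_of_canonicalPath_step_eq {s t s' t' : StableSet G} {i i' : ℕ}
    (hne : canonicalPath s t i ≠ canonicalPath s t (i + 1))
    (hstep : s(canonicalPath s t i, canonicalPath s t (i + 1)) =
      s(canonicalPath s' t' i', canonicalPath s' t' (i' + 1)))
    (hswap : canonicalPath t s i = canonicalPath t' s' i') : s = s' ∧ t = t' := by
  obtain ⟨x, hx⟩ := nonempty_componentAt_of_canonicalPath_ne hne
  rcases Sym2.eq_iff.1 hstep with ⟨hu, hv⟩ | ⟨hu, hv⟩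
  · have hD : s.1 ∆ t.1 = s'.1 ∆ t'.1 := by
      rw [← canonicalPath_symmDiff_canonicalPath_swap, hu, hswap,
        canonicalPath_symmDiff_canonicalPath_swap]
    have hx' : x ∈ G.componentAt (s'.1 ∆ t'.1) i' := by
      rwa [← canonicalPath_symmDiff_succ, ← hu, ← hv, canonicalPath_symmDiff_succ]
    have hi : i = i' := hx.2.symm.trans (hD ▸ hx'.2)
    have hs : s = s' := Subtype.ext <| by
      rw [← canonicalPath_symmDiff_componentsBelow s t i,
        ← canonicalPath_symmDiff_componentsBelow s' t' i', hu, hD, hi]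
    refine ⟨hs, Subtype.ext ?_⟩
    rw [← symmDiff_symmDiff_cancel_left s.1 t.1, hD, hs, symmDiff_symmDiff_cancel_left]
  · -- Crossing the common component in opposite directions would make the two symmetric
    -- differences differ by exactly that component, which lies in both of them.
    exfalso
    have hx' : x ∈ G.componentAt (s'.1 ∆ t'.1) i' := by
      rwa [← canonicalPath_symmDiff_succ, ← hu, ← hv, symmDiff_comm,
        canonicalPath_symmDiff_succ]
    have hDD : (s.1 ∆ t.1) ∆ (s'.1 ∆ t'.1) = G.componentAt (s.1 ∆ t.1) i := by
      rw [← canonicalPath_symmDiff_succ, ← canonicalPath_symmDiff_canonicalPath_swap s t i,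
        ← canonicalPath_symmDiff_canonicalPath_swap s' t' i', ← hv, ← hswap,
        symmDiff_symmDiff_symmDiff_comm, symmDiff_self, symmDiff_bot]
    have hxDD := hDD ▸ hx
    rw [Set.mem_symmDiff] at hxDD
    exact hxDD.elim (fun h => h.2 hx'.1) fun h => h.2 hx.1

end StableSets

theorem stableSetGraph_edge_expansion_general
    {V : Type*} [Fintype V] (G : SimpleGraph V)
    (X : Set {s : Set V // IsStableSet G s})
    (hX2 : 2 * X.ncard ≤ Nat.card {s : Set V // IsStableSet G s}) :
    X.ncard ≤ (edgeBoundary (stableSetGraph G) X).ncard := by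
  have hcross : ∀ p ∈ X.cutPairs,
      ∃ i, (canonicalPath p.1 p.2 i ∈ X ↔ canonicalPath p.1 p.2 (i + 1) ∉ X) := by
    intro p hp
    obtain ⟨n, hn⟩ := exists_canonicalPath_eq p.1 p.2
    refine exists_mem_iff_notMem_succ _ (n := n) ?_
    rw [canonicalPath_zero, hn]
    exact Set.mem_cutPairs.1 hp
  choose! step hstep using hcross
  have hne : ∀ p ∈ X.cutPairs,
      canonicalPath p.1 p.2 (step p) ≠ canonicalPath p.1 p.2 (step p + 1) :=
    fun p hp h => by simpa [h] using hstep p hp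
  refine Set.ncard_le_of_injOn_cutPairs
    (fun p => (s(canonicalPath p.1 p.2 (step p), canonicalPath p.1 p.2 (step p + 1)),
      canonicalPath p.2 p.1 (step p)))
    (fun p hp => ⟨?_, trivial⟩) (fun p hp q _ h => ?_) hX2
  · exact mem_edgeBoundary_of_adj (stableSetGraph_adj_canonicalPath_succ (hne p hp)) (hstep p hp)
  · obtain ⟨h1, h2⟩ := eq_of_canonicalPath_step_eq (hne p hp) (congrArg Prod.fst h)
      (congrArg Prod.snd h)
    exact Prod.ext h1 h2

/-- The graph of the stable set polytope of a finite graph has edge expansion at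
least 1: every nonempty family `X` of stable sets containing at most half of all stable
sets has at least `|X|` boundary edges in `G_STAB`. -/
theorem stableSetGraph_edge_expansion
    {V : Type*} [Fintype V] (G : SimpleGraph V)
    (X : Set {s : Set V // IsStableSet G s}) (hX : X.Nonempty)
    (hX2 : 2 * X.ncard ≤ Nat.card {s : Set V // IsStableSet G s}) :
    X.ncard ≤ (edgeBoundary (stableSetGraph G) X).ncard :=
  stableSetGraph_edge_expansion_general G X hX2
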